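/- For every zero-error code C ⊆ S_q(n) for the (ℓ,r)-0-insertion channel, the map f is injective on C and its image satisfies f(C) ⊆ C_{q,ℓ,r}(n); in particular, f maps C bijectively onto a subcode of C_{q,ℓ,r}(n) of the same cardinality. -/

import Mathlib

/-!
Write `x = a₁ 0^{u₁} ⋯ aₘ 0^{uₘ}` with all `aᵢ ≠ 0`; then `f x = a₁ 0^{g u₁} ⋯ aₘ 0^{g uₘ}`.
The reduced length `g u = L(i, j)` is congruent to `u` modulo `ℓ`, and by maximality
`L(i, j + 1) = g u + (r (g u + 1) + 1) ℓ` exceeds `u`; hence `u = g u + k ℓ` with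
`k ≤ r (g u + 1)`. So if `g u = g v` and `u ≤ v`, then `v = u + k ℓ` with `k ≤ r (u + 1)`,
and these `k` blocks `0^ℓ` can be inserted after the `u + 1` symbols of `a 0^u`, at most `r`
after each. Consequently `f x = f y` forces `x` and `y` to be confusable (a common output takes
the longer of the two runs in each block), so `f` is injective on a zero-error code. Finally
`f x` is a subsequence of `x` made of blocks `a 0^{L(i,j)}`, hence lies in `C q ℓ r n`.
-/

namespace ZeroErrorDup

/-- Output relation of the (ℓ,r)-0-insertion channel acting on strings over the
alphabet A_q = {0,1,…,q−1} (encoded as lists of naturals): after each input symbol,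
`c` copies of the block `0^ℓ` are inserted, for some `c ∈ {0,1,…,r}`. -/
inductive IsOutput (ℓ r : ℕ) : List ℕ → List ℕ → Prop
  | nil : IsOutput ℓ r [] []
  | cons (a : ℕ) (c : ℕ) (hc : c ≤ r) {x y : List ℕ} :
      IsOutput ℓ r x y → IsOutput ℓ r (a :: x) (a :: (List.replicate (c * ℓ) 0 ++ y))

/-- Two strings are confusable if some string is an output of both. -/
def Confusable (ℓ r : ℕ) (x y : List ℕ) : Prop :=
  ∃ z, IsOutput ℓ r x z ∧ IsOutput ℓ r y z

/-- A set of strings is a zero-error code if every two distinct elements are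
non-confusable. -/
def ZeroErrorCode (ℓ r : ℕ) (C : Set (List ℕ)) : Prop :=
  ∀ x ∈ C, ∀ y ∈ C, x ≠ y → ¬ Confusable ℓ r x y

/-- `L ℓ r i j = ((r i + 1)(r ℓ + 1)^j − 1)/r − 1` (the division is exact). -/
def L (ℓ r i j : ℕ) : ℕ := ((r * i + 1) * (r * ℓ + 1) ^ j - 1) / r - 1

/-- The block `σ 0^u`: the symbol `σ` followed by a run of `u` zeros. -/
def block (σ u : ℕ) : List ℕ := σ :: List.replicate u 0

/-- `B q ℓ r`: the set of blocks `σ 0^{L(i,j)}` with `σ ∈ {1,…,q−1}`, `1 ≤ i ≤ ℓ`, `j ≥ 0`. -/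
def B (q ℓ r : ℕ) : Set (List ℕ) :=
  { b | ∃ σ i j : ℕ, 1 ≤ σ ∧ σ ≤ q - 1 ∧ 1 ≤ i ∧ i ≤ ℓ ∧ b = block σ (L ℓ r i j) }

/-- `S q n`: strings over `A_q` of length between 1 and `n` whose first symbol is nonzero. -/
def S (q n : ℕ) : Set (List ℕ) :=
  { x | x ≠ [] ∧ x.length ≤ n ∧ (∀ a ∈ x, a < q) ∧ x.headI ≠ 0 }

/-- `C q ℓ r n`: strings in `S q n` that are concatenations of blocks from `B q ℓ r`. -/
def C (q ℓ r n : ℕ) : Set (List ℕ) :=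
  { x | x ∈ S q n ∧ ∃ bs : List (List ℕ), (∀ b ∈ bs, b ∈ B q ℓ r) ∧ x = bs.flatten }

/-- Reduced run length: the largest integer of the form `L ℓ r i j` (with `1 ≤ i ≤ ℓ`,
`j ≥ 0`) that is at most `u` and congruent to `u` modulo `ℓ` (such an integer always
exists). -/
noncomputable def g (ℓ r u : ℕ) : ℕ :=
  sSup { m | (∃ i j : ℕ, 1 ≤ i ∧ i ≤ ℓ ∧ m = L ℓ r i j) ∧ m ≤ u ∧ m % ℓ = u % ℓ }

/-- The map `f`, shortening each maximal run of zeros of length `u` to length `g ℓ r u`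
and leaving all nonzero symbols in place. -/
noncomputable def f (ℓ r : ℕ) (x : List ℕ) : List ℕ :=
  match h : x.dropWhile (· == 0) with
  | [] => List.replicate (g ℓ r (x.takeWhile (· == 0)).length) 0
  | a :: t =>
      List.replicate (g ℓ r (x.takeWhile (· == 0)).length) 0 ++ a :: f ℓ r t
termination_by x.length
decreasing_by
  have h1 : (x.dropWhile (· == 0)).length ≤ x.length :=
    (List.dropWhile_sublist _).length_le
  rw [h] at h1
  simp only [List.length_cons] at h1
  omega

theorem exists_pow_eq_mul_add_one (r ℓ j : ℕ) : ∃ s, (r * ℓ + 1) ^ j = r * s + 1 := by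
  induction j with
  | zero => exact ⟨0, by simp⟩
  | succ j ih =>
    obtain ⟨s, hs⟩ := ih
    exact ⟨s * r * ℓ + s + ℓ, by rw [pow_succ, hs]; ring⟩

theorem mul_L_add_one {ℓ r i : ℕ} (hr : 0 < r) (hi : 0 < i) (j : ℕ) :
    r * (L ℓ r i j + 1) + 1 = (r * i + 1) * (r * ℓ + 1) ^ j := by
  obtain ⟨s, hs⟩ := exists_pow_eq_mul_add_one r ℓ j
  have hexpand : (r * i + 1) * (r * ℓ + 1) ^ j - 1 = r * (i * r * s + i + s) := by
    rw [hs]; ring_nf; omega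
  have hpos : 0 < i * r * s + i + s := by positivity
  rw [L, hexpand, Nat.mul_div_cancel_left _ hr, Nat.sub_add_cancel hpos, hs]
  ring

theorem L_zero {ℓ r i : ℕ} (hr : 0 < r) (hi : 0 < i) : L ℓ r i 0 = i - 1 := by
  have h := mul_L_add_one (ℓ := ℓ) hr hi 0
  rw [pow_zero, mul_one, add_left_inj] at h
  have := Nat.eq_of_mul_eq_mul_left hr h
  omega

theorem L_succ {ℓ r i : ℕ} (hr : 0 < r) (hi : 0 < i) (j : ℕ) :
    L ℓ r i (j + 1) = L ℓ r i j + (r * (L ℓ r i j + 1) + 1) * ℓ := by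
  have h := mul_L_add_one (ℓ := ℓ) hr hi (j + 1)
  rw [pow_succ, ← mul_assoc, ← mul_L_add_one hr hi j] at h
  apply Nat.eq_of_mul_eq_mul_left hr
  nlinarith

theorem g_le (ℓ r u : ℕ) : g ℓ r u ≤ u :=
  csSup_le' fun _ hm => hm.2.1

theorem g_zero (ℓ r : ℕ) : g ℓ r 0 = 0 :=
  Nat.le_zero.mp (g_le ℓ r 0)

theorem g_mem {ℓ r : ℕ} (hℓ : 0 < ℓ) (hr : 0 < r) (u : ℕ) :
    g ℓ r u ∈ { m | (∃ i j : ℕ, 1 ≤ i ∧ i ≤ ℓ ∧ m = L ℓ r i j) ∧ m ≤ u ∧ m % ℓ = u % ℓ } := by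
  refine Nat.sSup_mem ⟨u % ℓ, ⟨u % ℓ + 1, 0, by omega, Nat.mod_lt u hℓ, ?_⟩, Nat.mod_le u ℓ,
    Nat.mod_mod u ℓ⟩ ⟨u, fun _ hm => hm.2.1⟩
  rw [L_zero hr (Nat.succ_pos _), Nat.succ_sub_one]

theorem exists_eq_g_add_mul {ℓ r : ℕ} (hℓ : 0 < ℓ) (hr : 0 < r) (u : ℕ) :
    ∃ k ≤ r * (g ℓ r u + 1), u = g ℓ r u + k * ℓ := by
  obtain ⟨⟨i, j, hi, hiℓ, hL⟩, hle, hmod⟩ := g_mem hℓ hr u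
  obtain ⟨k, hk⟩ : ℓ ∣ u - g ℓ r u := (Nat.modEq_iff_dvd' hle).mp hmod
  have hu : u = g ℓ r u + k * ℓ := by rw [mul_comm, ← hk]; omega
  refine ⟨k, ?_, hu⟩
  have hnext : u < L ℓ r i (j + 1) := by
    by_contra! hle'
    have hmem : L ℓ r i (j + 1) ≤ g ℓ r u :=
      le_csSup ⟨u, fun _ hm => hm.2.1⟩ ⟨⟨i, j + 1, hi, hiℓ, rfl⟩, hle', by
        rw [L_succ hr hi, Nat.add_mul_mod_self_right, ← hL, hmod]⟩
    rw [L_succ hr hi, ← hL] at hmem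
    have : 0 < (r * (g ℓ r u + 1) + 1) * ℓ := by positivity
    omega
  rw [L_succ hr hi, ← hL] at hnext
  have : k * ℓ < (r * (g ℓ r u + 1) + 1) * ℓ := by omega
  exact Nat.lt_succ_iff.mp (Nat.lt_of_mul_lt_mul_right this)

theorem exists_eq_add_mul_of_g_eq {ℓ r : ℕ} (hℓ : 0 < ℓ) (hr : 0 < r) {u v : ℕ}
    (hg : g ℓ r u = g ℓ r v) (huv : u ≤ v) : ∃ k ≤ r * (u + 1), v = u + k * ℓ := by
  obtain ⟨k, -, hu⟩ := exists_eq_g_add_mul hℓ hr u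
  obtain ⟨k', hk', hv⟩ := exists_eq_g_add_mul hℓ hr v
  rw [← hg] at hk' hv
  have hkk : k ≤ k' := by
    by_contra! h
    nlinarith
  refine ⟨k' - k, ?_, by rw [Nat.sub_mul]; omega⟩
  calc k' - k ≤ k' := Nat.sub_le k' k
    _ ≤ r * (g ℓ r u + 1) := hk'
    _ ≤ r * (u + 1) := Nat.mul_le_mul_left r (Nat.add_le_add_right (g_le ℓ r u) 1)

theorem zeroRun_induction {motive : List ℕ → Prop}
    (replicate : ∀ u, motive (List.replicate u 0))
    (replicate_append : ∀ u a t, a ≠ 0 → motive t → motive (List.replicate u 0 ++ a :: t))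
    (x : List ℕ) : motive x := by
  suffices ∀ u, motive (List.replicate u 0 ++ x) from this 0
  induction x with
  | nil => simpa using replicate
  | cons b t ih =>
    intro u
    by_cases hb : b = 0
    · subst hb
      simpa [List.replicate_succ'] using ih (u + 1)
    · exact replicate_append u b t hb (by simpa using ih 0)

theorem zeroRun_cases (x : List ℕ) :
    (∃ u, x = List.replicate u 0) ∨ ∃ u a t, a ≠ 0 ∧ x = List.replicate u 0 ++ a :: t := by
  induction x using zeroRun_induction with
  | replicate u => exact Or.inl ⟨u, rfl⟩
  | replicate_append u a t ha _ => exact Or.inr ⟨u, a, t, ha, rfl⟩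

theorem takeWhile_replicate_append {u a : ℕ} (ha : a ≠ 0) (t : List ℕ) :
    (List.replicate u 0 ++ a :: t).takeWhile (· == 0) = List.replicate u 0 := by
  simp [ha]

theorem dropWhile_replicate_append {u a : ℕ} (ha : a ≠ 0) (t : List ℕ) :
    (List.replicate u 0 ++ a :: t).dropWhile (· == 0) = a :: t := by
  simp [ha]

theorem replicate_append_cons_inj {u v a b : ℕ} (ha : a ≠ 0) (hb : b ≠ 0) {s t : List ℕ}
    (h : List.replicate u 0 ++ a :: s = List.replicate v 0 ++ b :: t) :
    u = v ∧ a = b ∧ s = t := by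
  have hu := congrArg (List.takeWhile (· == 0)) h
  have hd := congrArg (List.dropWhile (· == 0)) h
  rw [takeWhile_replicate_append ha, takeWhile_replicate_append hb,
    List.replicate_inj] at hu
  rw [dropWhile_replicate_append ha, dropWhile_replicate_append hb, List.cons.injEq] at hd
  exact ⟨hu.1, hd⟩

theorem f_replicate (ℓ r u : ℕ) : f ℓ r (List.replicate u 0) = List.replicate (g ℓ r u) 0 := by
  have hd : (List.replicate u 0).dropWhile (· == 0) = [] := by simp
  rw [f, hd]
  simp

theorem f_replicate_append (ℓ r u : ℕ) {a : ℕ} (ha : a ≠ 0) (t : List ℕ) :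
    f ℓ r (List.replicate u 0 ++ a :: t) = List.replicate (g ℓ r u) 0 ++ a :: f ℓ r t := by
  rw [f, dropWhile_replicate_append ha, takeWhile_replicate_append ha, List.length_replicate]

theorem f_cons (ℓ r : ℕ) {a : ℕ} (ha : a ≠ 0) (t : List ℕ) : f ℓ r (a :: t) = a :: f ℓ r t := by
  simpa [g_zero] using f_replicate_append ℓ r 0 ha t

theorem f_sublist (ℓ r : ℕ) (x : List ℕ) : (f ℓ r x).Sublist x := by
  induction x using zeroRun_induction with
  | replicate u =>
    rw [f_replicate, List.replicate_sublist_replicate]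
    exact g_le ℓ r u
  | replicate_append u a t ha ih =>
    rw [f_replicate_append ℓ r u ha]
    exact ((List.replicate_sublist_replicate 0).mpr (g_le ℓ r u)).append (ih.cons_cons a)

theorem isOutput_refl (ℓ r : ℕ) (x : List ℕ) : IsOutput ℓ r x x := by
  induction x with
  | nil => exact .nil
  | cons a t ih => simpa using IsOutput.cons a 0 (Nat.zero_le r) ih

theorem IsOutput.append {ℓ r : ℕ} {x y x' y' : List ℕ} (h : IsOutput ℓ r x y)
    (h' : IsOutput ℓ r x' y') : IsOutput ℓ r (x ++ x') (y ++ y') := by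
  induction h with
  | nil => exact h'
  | cons a c hc _ ih => simpa using IsOutput.cons a c hc ih

theorem isOutput_cons_replicate (ℓ r a : ℕ) {u k : ℕ} (hk : k ≤ r * (u + 1)) :
    IsOutput ℓ r (a :: List.replicate u 0) (a :: List.replicate (u + k * ℓ) 0) := by
  induction u generalizing a k with
  | zero => simpa using IsOutput.cons a k (by simpa using hk) IsOutput.nil
  | succ u ih =>
    have hrest : k - min k r ≤ r * (u + 1) := by
      have : r * (u + 1 + 1) = r * (u + 1) + r := by ring
      omega
    have hsplit : k * ℓ = min k r * ℓ + (k - min k r) * ℓ := by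
      rw [← Nat.add_mul, Nat.add_sub_cancel' (min_le_left k r)]
    have hrun : List.replicate (min k r * ℓ) 0 ++ 0 :: List.replicate (u + (k - min k r) * ℓ) 0 =
        List.replicate (u + 1 + k * ℓ) 0 := by
      rw [← List.replicate_succ, ← List.replicate_add]
      congr 1
      omega
    have h := IsOutput.cons a (min k r) (min_le_right k r) (ih 0 hrest)
    rwa [hrun] at h

theorem Confusable.symm {ℓ r : ℕ} {x y : List ℕ} (h : Confusable ℓ r x y) :
    Confusable ℓ r y x :=
  let ⟨z, hx, hy⟩ := h
  ⟨z, hy, hx⟩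

theorem Confusable.append {ℓ r : ℕ} {x y x' y' : List ℕ} (h : Confusable ℓ r x y)
    (h' : Confusable ℓ r x' y') : Confusable ℓ r (x ++ x') (y ++ y') :=
  let ⟨z, hx, hy⟩ := h
  let ⟨z', hx', hy'⟩ := h'
  ⟨z ++ z', hx.append hx', hy.append hy'⟩

theorem confusable_cons_replicate_of_g_eq {ℓ r : ℕ} (hℓ : 0 < ℓ) (hr : 0 < r) (a : ℕ)
    {u v : ℕ} (hg : g ℓ r u = g ℓ r v) :
    Confusable ℓ r (a :: List.replicate u 0) (a :: List.replicate v 0) := by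
  wlog huv : u ≤ v generalizing u v
  · exact (this hg.symm (le_of_not_ge huv)).symm
  obtain ⟨k, hk, rfl⟩ := exists_eq_add_mul_of_g_eq hℓ hr hg huv
  exact ⟨_, isOutput_cons_replicate ℓ r a hk, isOutput_refl ℓ r _⟩

theorem confusable_cons_of_f_eq {ℓ r : ℕ} (hℓ : 0 < ℓ) (hr : 0 < r) (a : ℕ) {x y : List ℕ}
    (h : f ℓ r x = f ℓ r y) : Confusable ℓ r (a :: x) (a :: y) := by
  induction x using zeroRun_induction generalizing a y with
  | replicate u =>
    rcases zeroRun_cases y with ⟨v, rfl⟩ | ⟨v, b, t', hb, rfl⟩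
    · rw [f_replicate, f_replicate, List.replicate_inj] at h
      exact confusable_cons_replicate_of_g_eq hℓ hr a h.1
    · rw [f_replicate, f_replicate_append ℓ r v hb] at h
      exact absurd (List.eq_of_mem_replicate (h ▸ by simp : b ∈ List.replicate (g ℓ r u) 0)) hb
  | replicate_append u b t hb ih =>
    rcases zeroRun_cases y with ⟨v, rfl⟩ | ⟨v, b', t', hb', rfl⟩
    · rw [f_replicate, f_replicate_append ℓ r u hb] at h
      exact absurd (List.eq_of_mem_replicate (h ▸ by simp : b ∈ List.replicate (g ℓ r v) 0)) hb
    · rw [f_replicate_append ℓ r u hb, f_replicate_append ℓ r v hb'] at h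
      obtain ⟨hg, rfl, hf⟩ := replicate_append_cons_inj hb hb' h
      exact (confusable_cons_replicate_of_g_eq hℓ hr a hg).append (ih b hf)

theorem block_g_mem_B {q ℓ r : ℕ} (hℓ : 0 < ℓ) (hr : 0 < r) {a : ℕ} (ha : a ≠ 0) (haq : a < q)
    (u : ℕ) : block a (g ℓ r u) ∈ B q ℓ r := by
  obtain ⟨⟨i, j, hi, hiℓ, hL⟩, -⟩ := g_mem hℓ hr u
  exact ⟨a, i, j, Nat.one_le_iff_ne_zero.mpr ha, Nat.le_sub_one_of_lt haq, hi, hiℓ, by rw [hL]⟩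

theorem exists_flatten_eq_f_cons {q ℓ r : ℕ} (hℓ : 0 < ℓ) (hr : 0 < r) {a : ℕ} (ha : a ≠ 0)
    (haq : a < q) {t : List ℕ} (ht : ∀ s ∈ t, s < q) :
    ∃ bs : List (List ℕ), (∀ b ∈ bs, b ∈ B q ℓ r) ∧ f ℓ r (a :: t) = bs.flatten := by
  rw [f_cons ℓ r ha]
  induction t using zeroRun_induction generalizing a with
  | replicate u =>
    refine ⟨[block a (g ℓ r u)], by simpa using block_g_mem_B hℓ hr ha haq u, ?_⟩
    rw [f_replicate]
    simp [block]
  | replicate_append u b t hb ih =>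
    have hbt : ∀ s ∈ b :: t, s < q := fun s hs => ht s (by simp_all)
    obtain ⟨bs, hbs, hflat⟩ :=
      ih hb (hbt b List.mem_cons_self) fun s hs => hbt s (List.mem_cons_of_mem b hs)
    refine ⟨block a (g ℓ r u) :: bs, ?_, ?_⟩
    · simpa [block_g_mem_B hℓ hr ha haq u] using hbs
    · rw [f_replicate_append ℓ r u hb, List.flatten_cons, ← hflat]
      simp [block]

theorem f_mem_C {q ℓ r n : ℕ} (hℓ : 0 < ℓ) (hr : 0 < r) {x : List ℕ} (hx : x ∈ S q n) :
    f ℓ r x ∈ C q ℓ r n := by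
  obtain ⟨hne, hlen, hlt, hhead⟩ := hx
  obtain ⟨a, t, rfl⟩ := List.exists_cons_of_ne_nil hne
  have ha : a ≠ 0 := hhead
  refine ⟨⟨by simp [f_cons ℓ r ha], (f_sublist ℓ r _).length_le.trans hlen,
    fun s hs => hlt s ((f_sublist ℓ r _).subset hs), by simpa [f_cons ℓ r ha]⟩,
    exists_flatten_eq_f_cons hℓ hr ha (hlt a List.mem_cons_self)
      fun s hs => hlt s (List.mem_cons_of_mem a hs)⟩

theorem confusable_of_f_eq {q ℓ r n : ℕ} (hℓ : 0 < ℓ) (hr : 0 < r) {x y : List ℕ}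
    (hx : x ∈ S q n) (hy : y ∈ S q n) (h : f ℓ r x = f ℓ r y) : Confusable ℓ r x y := by
  obtain ⟨a, t, rfl⟩ := List.exists_cons_of_ne_nil hx.1
  obtain ⟨b, t', rfl⟩ := List.exists_cons_of_ne_nil hy.1
  have ha : a ≠ 0 := hx.2.2.2
  have hb : b ≠ 0 := hy.2.2.2
  rw [f_cons ℓ r ha, f_cons ℓ r hb, List.cons.injEq] at h
  obtain ⟨rfl, h⟩ := h
  exact confusable_cons_of_f_eq hℓ hr a h

theorem stmt9_general (q ℓ r n : ℕ) (hℓ : 1 ≤ ℓ) (hr : 1 ≤ r)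
    (Code : Set (List ℕ)) (hsub : Code ⊆ S q n) (hze : ZeroErrorCode ℓ r Code) :
    Set.InjOn (f ℓ r) Code ∧ f ℓ r '' Code ⊆ C q ℓ r n ∧
      (f ℓ r '' Code).ncard = Code.ncard := by
  have hinj : Set.InjOn (f ℓ r) Code := fun x hx y hy h =>
    by_contra fun hxy => hze x hx y hy hxy (confusable_of_f_eq hℓ hr (hsub hx) (hsub hy) h)
  exact ⟨hinj, Set.image_subset_iff.mpr fun x hx => f_mem_C hℓ hr (hsub hx), hinj.ncard_image⟩

/-- for every zero-error code `Code ⊆ S q n` for the (ℓ,r)-0-insertion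
channel, `f` is injective on `Code` and `f '' Code ⊆ C q ℓ r n`; in particular `f`
maps `Code` bijectively onto a subcode of `C q ℓ r n` of the same cardinality. -/
theorem stmt9 (q ℓ r n : ℕ) (hq : 2 ≤ q) (hℓ : 1 ≤ ℓ) (hr : 1 ≤ r)
    (Code : Set (List ℕ)) (hsub : Code ⊆ S q n) (hze : ZeroErrorCode ℓ r Code) :
    Set.InjOn (f ℓ r) Code ∧ f ℓ r '' Code ⊆ C q ℓ r n ∧
      (f ℓ r '' Code).ncard = Code.ncard :=
  stmt9_general q ℓ r n hℓ hr Code hsub hze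

end ZeroErrorDup
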